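/- Let A be a unital C*-algebra and let π : A → B(H) be a unital representation on a separable Hilbert space H. Then there exist a countable family {H_i}_{i∈I} of pairwise orthogonal nonzero finite-dimensional π(A)-invariant subspaces of H, together with a closed π(A)-invariant subspace H₀ orthogonal to all of them, such that H is the orthogonal direct sum of H₀ and the H_i, the restriction of π to H₀ is weakly mixing, and the restriction of π to each H_i is irreducible. -/
import Mathlib

open scoped InnerProductSpace

noncomputable section

/-- A closed subspace `K` is invariant under a unital representation `π`. -/
def CRepInvariant {A H : Type*} [CStarAlgebra A] [NormedAddCommGroup H]
    [InnerProductSpace ℂ H] [CompleteSpace H]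
    (π : A →⋆ₐ[ℂ] (H →L[ℂ] H)) (K : Submodule ℂ H) : Prop :=
  ∀ a : A, ∀ x ∈ K, π a x ∈ K

section Aux

variable {A H : Type*} [CStarAlgebra A] [NormedAddCommGroup H]
    [InnerProductSpace ℂ H] [CompleteSpace H]
    (π : A →⋆ₐ[ℂ] (H →L[ℂ] H))

/-- Irreducibility of the restriction to `V`. -/
def CRepIrred (V : Submodule ℂ H) : Prop :=
  ∀ L : Submodule ℂ H, L ≤ V → IsClosed (L : Set H) → CRepInvariant π L → L = ⊥ ∨ L = V

variable {π}

lemma CRepInvariant.orthogonal {K : Submodule ℂ H} (hK : CRepInvariant π K) :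
    CRepInvariant π Kᗮ := by
  intro a x hx
  rw [Submodule.mem_orthogonal]
  intro y hy
  have : ⟪y, π a x⟫_ℂ = ⟪π (star a) y, x⟫_ℂ := by
    rw [map_star, ContinuousLinearMap.star_eq_adjoint, ContinuousLinearMap.adjoint_inner_left]
  rw [this]
  exact hx _ (hK _ y hy)

lemma CRepInvariant.sSup' {F : Set (Submodule ℂ H)} (hF : ∀ V ∈ F, CRepInvariant π V) :
    CRepInvariant π (sSup F) := by
  intro a x hx
  have hmap : (sSup F).map (π a).toLinearMap ≤ sSup F := by
    conv_lhs => rw [sSup_eq_iSup', Submodule.map_iSup]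
    refine iSup_le fun V => ?_
    refine le_trans (Submodule.map_le_iff_le_comap.2 fun y hy => ?_) (le_sSup V.2)
    exact hF V V.2 a y hy
  exact hmap (Submodule.mem_map_of_mem hx)

variable (π)

/-- Every nonzero finite-dimensional invariant subspace contains a nonzero invariant
subspace on which the representation is irreducible. -/
lemma exists_min_invariant : ∀ (n : ℕ) (L : Submodule ℂ H), FiniteDimensional ℂ L →
    Module.finrank ℂ L ≤ n → L ≠ ⊥ → CRepInvariant π L →
    ∃ M : Submodule ℂ H, M ≤ L ∧ M ≠ ⊥ ∧ FiniteDimensional ℂ M ∧ CRepInvariant π M ∧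
      CRepIrred π M := by
  intro n
  induction n with
  | zero =>
    intro L hfd hle hne _
    exact absurd (Submodule.finrank_eq_zero.1 (Nat.le_zero.1 hle)) hne
  | succ n ih =>
    intro L hfd hle hne hinv
    by_cases hirr : CRepIrred π L
    · exact ⟨L, le_rfl, hne, hfd, hinv, hirr⟩
    · simp only [CRepIrred, not_forall] at hirr
      obtain ⟨L', hL'le, hL'closed, hL'inv, hL'⟩ := hirr
      push_neg at hL'
      obtain ⟨hL'ne, hL'neq⟩ := hL'
      have hfd' : FiniteDimensional ℂ L' := Submodule.finiteDimensional_of_le hL'le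
      have hlt : Module.finrank ℂ L' < Module.finrank ℂ L :=
        Submodule.finrank_lt_finrank_of_lt (lt_of_le_of_ne hL'le hL'neq)
      obtain ⟨M, hM1, hM⟩ := ih L' hfd' (by omega) hL'ne hL'inv
      exact ⟨M, hM1.trans hL'le, hM⟩

end Aux

/-- In a separable metric space, a set of points pairwise at distance ≥ 1 is countable. -/
lemma countable_of_separated {H : Type*} [MetricSpace H] [TopologicalSpace.SeparableSpace H]
    (s : Set H) (hs : ∀ x ∈ s, ∀ y ∈ s, x ≠ y → 1 ≤ dist x y) : s.Countable := by
  obtain ⟨D, hDc, hDd⟩ := TopologicalSpace.exists_countable_dense H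
  have hchoice : ∀ x : s, ∃ d ∈ D, dist (x : H) d < 1 / 2 := by
    intro x
    obtain ⟨d, hd1, hd2⟩ := Metric.dense_iff.1 hDd (x : H) (1 / 2) (by norm_num)
    exact ⟨d, hd2, by rw [dist_comm]; exact Metric.mem_ball.1 hd1⟩
  choose f hfD hfd using hchoice
  have hinj : Function.Injective f := by
    intro x y hxy
    by_contra hne
    have hne' : (x : H) ≠ y := fun h => hne (Subtype.ext h)
    have h1 := hs x x.2 y y.2 hne'
    have h2 : dist (x : H) y ≤ dist (x : H) (f x) + dist (f y) (y : H) := by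
      calc dist (x : H) y ≤ dist (x : H) (f x) + dist (f x) (y : H) := dist_triangle _ _ _
        _ = dist (x : H) (f x) + dist (f y) (y : H) := by rw [hxy, dist_comm]
    have hx := hfd x
    have hy := hfd y
    rw [dist_comm] at hy
    linarith
  have : Countable s := by
    have hc : Countable D := hDc.to_subtype
    exact Function.Injective.countable
      (f := fun x : s => (⟨f x, hfD x⟩ : D)) (fun a b h => hinj (congrArg Subtype.val h))
  exact Set.countable_coe_iff.1 this

/-- every unital representation of a unital C*-algebra on a separable Hilbert
space decomposes as an orthogonal direct sum of a weakly mixing part `H₀` and countably many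
nonzero finite-dimensional invariant subspaces on which the representation is irreducible. -/
theorem exists_weaklyMixing_finiteDimensional_decomposition
    {A H : Type*} [CStarAlgebra A] [NormedAddCommGroup H]
    [InnerProductSpace ℂ H] [CompleteSpace H] [TopologicalSpace.SeparableSpace H]
    (π : A →⋆ₐ[ℂ] (H →L[ℂ] H)) :
    ∃ (ι : Type) (_ : Countable ι) (H₀ : Submodule ℂ H) (V : ι → Submodule ℂ H),
      -- `H₀` is a closed invariant subspace
      IsClosed (H₀ : Set H) ∧ CRepInvariant π H₀ ∧
      -- each `V i` is a nonzero finite-dimensional invariant subspace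
      (∀ i, V i ≠ ⊥ ∧ FiniteDimensional ℂ (V i) ∧ CRepInvariant π (V i)) ∧
      -- the subspaces are pairwise orthogonal, and `H₀` is orthogonal to each of them
      (∀ i j, i ≠ j → V i ≤ (V j)ᗮ) ∧ (∀ i, H₀ ≤ (V i)ᗮ) ∧
      -- together they span `H`, i.e. `H` is their orthogonal direct sum
      (H₀ ⊔ ⨆ i, V i).topologicalClosure = ⊤ ∧
      -- the restriction of `π` to `H₀` is weakly mixing
      (∀ L : Submodule ℂ H, L ≤ H₀ → IsClosed (L : Set H) → FiniteDimensional ℂ L →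
        CRepInvariant π L → L = ⊥) ∧
      -- the restriction of `π` to each `V i` is irreducible
      (∀ i, ∀ L : Submodule ℂ H, L ≤ V i → IsClosed (L : Set H) →
        CRepInvariant π L → L = ⊥ ∨ L = V i) := by
  classical
  set Good : Set (Set (Submodule ℂ H)) :=
    {F | (∀ V ∈ F, V ≠ ⊥ ∧ FiniteDimensional ℂ V ∧ CRepInvariant π V ∧ CRepIrred π V) ∧
      (∀ V ∈ F, ∀ W ∈ F, V ≠ W → V ≤ Wᗮ)} with hGoodDef
  obtain ⟨F, hF⟩ : ∃ F, Maximal (· ∈ Good) F := by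
    apply zorn_subset
    intro c hcS hchain
    refine ⟨⋃₀ c, ⟨?_, ?_⟩, fun s hs => Set.subset_sUnion_of_mem hs⟩
    · rintro V ⟨t, htc, hVt⟩
      exact (hcS htc).1 V hVt
    · rintro V ⟨t, htc, hVt⟩ W ⟨u, huc, hWu⟩ hne
      rcases hchain.total htc huc with h | h
      · exact (hcS huc).2 V (h hVt) W hWu hne
      · exact (hcS htc).2 V hVt W (h hWu) hne
  have hFgood := hF.1
  set S : Submodule ℂ H := sSup F with hSdef
  set H₀ : Submodule ℂ H := Sᗮ with hH₀def
  have hSinv : CRepInvariant π S := CRepInvariant.sSup' fun V hV => (hFgood.1 V hV).2.2.1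
  -- countability of F
  have hvec : ∀ V : F, ∃ x : H, x ∈ (V : Submodule ℂ H) ∧ ‖x‖ = 1 := by
    rintro ⟨V, hV⟩
    obtain ⟨x, hxV, hx0⟩ := Submodule.exists_mem_ne_zero_of_ne_bot (hFgood.1 V hV).1
    refine ⟨‖x‖⁻¹ • x, V.smul_mem _ hxV, ?_⟩
    rw [norm_smul, norm_inv, norm_norm, inv_mul_cancel₀ (norm_ne_zero_iff.2 hx0)]
  choose v hvmem hvnorm using hvec
  have hvinj : Function.Injective v := by
    intro V W hVW
    by_contra hne
    have horth : (W : Submodule ℂ H) ≤ (V : Submodule ℂ H)ᗮ :=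
      hFgood.2 W W.2 V V.2 (fun h => hne (Subtype.ext h.symm))
    have h0 : ⟪v V, v V⟫_ℂ = 0 :=
      (congrArg (fun t => ⟪v V, t⟫_ℂ) hVW).trans ((horth (hvmem W)) (v V) (hvmem V))
    rw [inner_self_eq_zero] at h0
    have := hvnorm V
    rw [h0, norm_zero] at this
    norm_num at this
  have hFc : F.Countable := by
    have hrangec : (Set.range v).Countable := by
      apply countable_of_separated
      rintro _ ⟨V, rfl⟩ _ ⟨W, rfl⟩ hne
      have hVW : V ≠ W := fun h => hne (by rw [h])
      have horth : ⟪v V, v W⟫_ℂ = 0 := by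
        have := hFgood.2 W W.2 V V.2 (fun h => hVW (Subtype.ext h.symm))
        exact (this (hvmem W)) (v V) (hvmem V)
      have hdist : dist (v V) (v W) ^ 2 = 2 := by
        rw [dist_eq_norm, @norm_sub_sq ℂ, horth]
        simp [hvnorm V, hvnorm W]
        norm_num
      nlinarith [dist_nonneg (x := v V) (y := v W)]
    have : Countable (Set.range v) := hrangec.to_subtype
    have : Countable F := Function.Injective.countable
      (f := fun x : F => (⟨v x, Set.mem_range_self x⟩ : Set.range v))
      (fun a b h => hvinj (congrArg Subtype.val h))
    exact Set.countable_coe_iff.1 this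
  have : Countable F := hFc.to_subtype
  obtain ⟨e⟩ : Nonempty (F ↪ ℕ) := nonempty_embedding_nat F
  refine ⟨Set.range e, inferInstance, H₀,
    fun i => ((Equiv.ofInjective e e.injective).symm i : F), ?_, ?_, ?_, ?_, ?_, ?_, ?_, ?_⟩
  · exact Submodule.isClosed_orthogonal S
  · exact hSinv.orthogonal
  · intro i
    set W := (Equiv.ofInjective e e.injective).symm i
    exact ⟨(hFgood.1 W W.2).1, (hFgood.1 W W.2).2.1, (hFgood.1 W W.2).2.2.1⟩
  · intro i j hij
    set Wi := (Equiv.ofInjective e e.injective).symm i with hWi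
    set Wj := (Equiv.ofInjective e e.injective).symm j with hWj
    have hne : Wi ≠ Wj := fun h => hij ((Equiv.ofInjective e e.injective).symm.injective h)
    exact hFgood.2 Wi Wi.2 Wj Wj.2 (fun h => hne (Subtype.ext h))
  · intro i
    exact Submodule.orthogonal_le (le_sSup ((Equiv.ofInjective e e.injective).symm i).2)
  · rw [Submodule.topologicalClosure_eq_top_iff]
    have hiSup : (⨆ i : Set.range e, (((Equiv.ofInjective e e.injective).symm i : F) :
        Submodule ℂ H)) = S := by
      rw [hSdef, sSup_eq_iSup']
      exact (Equiv.ofInjective e e.injective).symm.iSup_comp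
        (g := fun V : F => (V : Submodule ℂ H))
    rw [hiSup]
    have h1 : (H₀ ⊔ S)ᗮ ≤ Sᗮᗮ := by
      rw [hH₀def]
      exact Submodule.orthogonal_le le_sup_left
    have h2 : (H₀ ⊔ S)ᗮ ≤ Sᗮ := Submodule.orthogonal_le le_sup_right
    exact le_bot_iff.1 ((Submodule.orthogonal_disjoint Sᗮ) h2 h1)
  · intro L hLH₀ hLclosed hLfd hLinv
    by_contra hLne
    obtain ⟨M, hML, hMne, hMfd, hMinv, hMirr⟩ :=
      exists_min_invariant π (Module.finrank ℂ L) L hLfd le_rfl hLne hLinv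
    have hMH₀ : M ≤ H₀ := hML.trans hLH₀
    have hgood' : insert M F ∈ Good := by
      constructor
      · intro V hVmem
        rcases Set.mem_insert_iff.1 hVmem with hVM | hV
        · exact hVM ▸ ⟨hMne, hMfd, hMinv, hMirr⟩
        · exact hFgood.1 V hV
      · intro V hVmem W hWmem hne
        rcases Set.mem_insert_iff.1 hVmem with hVM | hV <;>
          rcases Set.mem_insert_iff.1 hWmem with hWM | hW
        · exact absurd (hVM.trans hWM.symm) hne
        · exact hVM ▸ hMH₀.trans (Submodule.orthogonal_le (le_sSup hW))
        · -- V ∈ F, W = M : V ≤ Mᗮ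
          subst hWM
          have hMV : W ≤ Vᗮ := hMH₀.trans (Submodule.orthogonal_le (le_sSup hV))
          intro x hxV
          rw [Submodule.mem_orthogonal]
          intro u hu
          have h0 := (hMV hu) x hxV
          rw [← inner_conj_symm, h0, map_zero]
        · exact hFgood.2 V hV W hW hne
    have hMF : M ∈ F := hF.2 hgood' (Set.subset_insert M F) (Set.mem_insert M F)
    have hMS : M ≤ S := le_sSup hMF
    exact hMne (le_bot_iff.1 ((Submodule.orthogonal_disjoint S) hMS hMH₀))
  · intro i
    set W := (Equiv.ofInjective e e.injective).symm i
    exact (hFgood.1 W W.2).2.2.2
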